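/- Orthogonal Procrustes: for A, B ∈ ℝ^{m×n}, the minimum of ‖B − AO‖_F² over orthogonal O ∈ ℝ^{n×n} equals ‖A‖_F² + ‖B‖_F² − 2‖AᵀB‖_*, attained at Ô = UVᵀ where AᵀB = UΣVᵀ is a singular value decomposition. -/

import Mathlib

/-!
Since `O` is orthogonal, `‖B - A O‖_F² = ‖A‖_F² + ‖B‖_F² - 2 tr(Oᵀ AᵀB)`, so one has to maximise
`tr(Oᵀ U Σ Vᵀ) = tr(W Σ)` with `W = Vᵀ Oᵀ U` again orthogonal. The entries of an orthogonal matrix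
lie in `[-1, 1]`, hence `tr(W Σ) = ∑ Wᵢᵢ σᵢ ≤ ∑ σᵢ`, with equality for `W = 1`, i.e. `O = U Vᵀ`.
-/

open Matrix BigOperators

namespace Matrix

variable {m n : Type*} [Fintype m] [Fintype n] [DecidableEq n]

lemma trace_mul_diagonal_le_sum {W : Matrix n n ℝ} (hW : W ∈ orthogonalGroup n ℝ)
    {σ : n → ℝ} (hσ : ∀ i, 0 ≤ σ i) :
    (W * diagonal σ).trace ≤ ∑ i, σ i := by
  simp only [trace, diag_apply, mul_diagonal]
  refine Finset.sum_le_sum fun i _ => mul_le_of_le_one_left (hσ i) ?_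
  exact (le_abs_self _).trans (entry_norm_bound_of_unitary hW i i)

lemma trace_transpose_mul_self_sub_mul {R : Type*} [CommRing R] (A B : Matrix m n R)
    {O : Matrix n n R} (hO : O ∈ orthogonalGroup n R) :
    ((B - A * O)ᵀ * (B - A * O)).trace =
      (Aᵀ * A).trace + (Bᵀ * B).trace - 2 * (Oᵀ * (Aᵀ * B)).trace := by
  have hAO : ((A * O)ᵀ * (A * O)).trace = (Aᵀ * A).trace := by
    rw [transpose_mul, Matrix.mul_assoc, trace_mul_comm, Matrix.mul_assoc, Matrix.mul_assoc,
      (mem_orthogonalGroup_iff n R).mp hO, Matrix.mul_one]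
  have hBAO : (Bᵀ * (A * O)).trace = (Oᵀ * (Aᵀ * B)).trace := by
    rw [← trace_transpose, transpose_mul, transpose_mul, transpose_transpose, Matrix.mul_assoc]
  rw [transpose_sub, Matrix.sub_mul, Matrix.mul_sub, Matrix.mul_sub, trace_sub, trace_sub,
    trace_sub, hAO, hBAO, transpose_mul, Matrix.mul_assoc]
  ring

variable {U V O : Matrix n n ℝ} {σ : n → ℝ}

lemma trace_transpose_mul_svd_le (hU : U ∈ orthogonalGroup n ℝ) (hV : V ∈ orthogonalGroup n ℝ)
    (hO : O ∈ orthogonalGroup n ℝ) (hσ : ∀ i, 0 ≤ σ i) :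
    (Oᵀ * (U * diagonal σ * Vᵀ)).trace ≤ ∑ i, σ i := by
  have hW : Vᵀ * Oᵀ * U ∈ orthogonalGroup n ℝ :=
    mul_mem (mul_mem (transpose_mem_unitaryGroup_iff.mpr hV)
      (transpose_mem_unitaryGroup_iff.mpr hO)) hU
  calc (Oᵀ * (U * diagonal σ * Vᵀ)).trace = (Vᵀ * Oᵀ * U * diagonal σ).trace := by
        rw [trace_mul_cycle']; simp only [Matrix.mul_assoc]
    _ ≤ ∑ i, σ i := trace_mul_diagonal_le_sum hW hσ

lemma trace_transpose_mul_svd_self (hU : U ∈ orthogonalGroup n ℝ) (hV : V ∈ orthogonalGroup n ℝ) :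
    ((U * Vᵀ)ᵀ * (U * diagonal σ * Vᵀ)).trace = ∑ i, σ i := by
  calc ((U * Vᵀ)ᵀ * (U * diagonal σ * Vᵀ)).trace = (V * (Uᵀ * U) * diagonal σ * Vᵀ).trace := by
        simp only [transpose_mul, transpose_transpose, Matrix.mul_assoc]
    _ = (Vᵀ * V * diagonal σ).trace := by
        rw [(mem_orthogonalGroup_iff' n ℝ).mp hU, Matrix.mul_one, trace_mul_comm, Matrix.mul_assoc]
    _ = ∑ i, σ i := by
        rw [(mem_orthogonalGroup_iff' n ℝ).mp hV, Matrix.one_mul, trace_diagonal]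

end Matrix

/-- Orthogonal Procrustes: for A, B ∈ ℝ^{m×n}, with AᵀB = UΣVᵀ an SVD,
the minimum of ‖B − AO‖_F² over orthogonal O equals
‖A‖_F² + ‖B‖_F² − 2‖AᵀB‖_*, attained at Ô = UVᵀ. -/
theorem orthogonal_procrustes (m n : ℕ)
    (A B : Matrix (Fin m) (Fin n) ℝ)
    (U V : Matrix (Fin n) (Fin n) ℝ) (σ : Fin n → ℝ)
    (hσ : ∀ i, 0 ≤ σ i)
    (hU : Uᵀ * U = 1) (hV : Vᵀ * V = 1)
    (hSVD : Aᵀ * B = U * Matrix.diagonal σ * Vᵀ) :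
    IsLeast {t : ℝ | ∃ O : Matrix (Fin n) (Fin n) ℝ,
        Oᵀ * O = 1 ∧ t = ((B - A * O)ᵀ * (B - A * O)).trace}
      ((Aᵀ * A).trace + (Bᵀ * B).trace - 2 * ∑ i, σ i) ∧
    ((B - A * (U * Vᵀ))ᵀ * (B - A * (U * Vᵀ))).trace =
      (Aᵀ * A).trace + (Bᵀ * B).trace - 2 * ∑ i, σ i := by
  rw [← mem_orthogonalGroup_iff' _ ℝ] at hU hV
  have hUV : U * Vᵀ ∈ orthogonalGroup (Fin n) ℝ :=
    mul_mem hU (transpose_mem_unitaryGroup_iff.mpr hV)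
  have hmin : ((B - A * (U * Vᵀ))ᵀ * (B - A * (U * Vᵀ))).trace =
      (Aᵀ * A).trace + (Bᵀ * B).trace - 2 * ∑ i, σ i := by
    rw [trace_transpose_mul_self_sub_mul A B hUV, hSVD, trace_transpose_mul_svd_self hU hV]
  refine ⟨⟨⟨U * Vᵀ, (mem_orthogonalGroup_iff' _ ℝ).mp hUV, hmin.symm⟩, ?_⟩, hmin⟩
  rintro _ ⟨O, hO, rfl⟩
  rw [← mem_orthogonalGroup_iff' _ ℝ] at hO
  rw [trace_transpose_mul_self_sub_mul A B hO, hSVD]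
  linarith [trace_transpose_mul_svd_le hU hV hO hσ]
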